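/- arXiv:2304.00210 — 5 statements merged into one kernel-verified Lean document; each statement's English description precedes it below -/
import Mathlib

section
/- The Tarski Laplacian update map F(X) = L(X) ∧ X is non-expansive in the sup-norm: ‖F(X) − F(Y)‖_∞ ≤ ‖X − Y‖_∞ for all X, Y ∈ (ℝ^d)^N. -/
open Finset

/-- Max-plus matrix-vector product (finite entries). -/
def maxPlus {m n : Type*} [Fintype n] [Nonempty n] (A : m → n → ℝ) (x : n → ℝ) : m → ℝ :=
  fun i => Finset.univ.sup' Finset.univ_nonempty (fun j => A i j + x j)

/-- Min-plus matrix-vector product (finite entries). -/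
def minPlus {m n : Type*} [Fintype n] [Nonempty n] (A : m → n → ℝ) (x : n → ℝ) : m → ℝ :=
  fun i => Finset.univ.inf' Finset.univ_nonempty (fun j => A i j + x j)

/-- Pseudoinverse (residual) of a matrix: [A^♯]_{j,i} = -A_{i,j}. -/
def sharp {m n : Type*} (A : m → n → ℝ) : n → m → ℝ := fun j i => - A i j

variable {V ι : Type*}

/-- The (weighted) tropical Tarski Laplacian:
L(X)_u = ⋀_{v ∈ N(u)} (W_{u,v} + A_{u,v}^♯ ⊞' (A_{v,u} ⊞ X_v)). -/
def tarskiL [Fintype V] [Fintype ι] [Nonempty ι]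
    (E : V → V → Prop) [DecidableRel E]
    (hE : ∀ u : V, (Finset.univ.filter (E u)).Nonempty)
    (W : V → V → ℝ) (A : V → V → ι → ι → ℝ) (X : V → ι → ℝ) : V → ι → ℝ :=
  fun u i => (Finset.univ.filter (E u)).inf' (hE u)
    (fun v => W u v + minPlus (sharp (A u v)) (maxPlus (A v u) (X v)) i)

/-- The heat-equation update map F(X) = L(X) ∧ X. -/
def heatF [Fintype V] [Fintype ι] [Nonempty ι]
    (E : V → V → Prop) [DecidableRel E]
    (hE : ∀ u : V, (Finset.univ.filter (E u)).Nonempty)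
    (W : V → V → ℝ) (A : V → V → ι → ι → ℝ) (X : V → ι → ℝ) : V → ι → ℝ :=
  fun u i => min (tarskiL E hE W A X u i) (X u i)

lemma abs_sup'_sub_sup'_le {α : Type*} (s : Finset α) (hs : s.Nonempty)
    (f g : α → ℝ) (c : ℝ) (h : ∀ a ∈ s, |f a - g a| ≤ c) :
    |s.sup' hs f - s.sup' hs g| ≤ c := by
  rw [abs_sub_le_iff]
  constructor
  · rw [sub_le_iff_le_add]
    apply Finset.sup'_le
    intro a ha
    have h2 := abs_sub_le_iff.mp (h a ha)
    linarith [Finset.le_sup' g ha]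
  · rw [sub_le_iff_le_add]
    apply Finset.sup'_le
    intro a ha
    have h2 := abs_sub_le_iff.mp (h a ha)
    linarith [Finset.le_sup' f ha]

lemma abs_inf'_sub_inf'_le {α : Type*} (s : Finset α) (hs : s.Nonempty)
    (f g : α → ℝ) (c : ℝ) (h : ∀ a ∈ s, |f a - g a| ≤ c) :
    |s.inf' hs f - s.inf' hs g| ≤ c := by
  rw [abs_sub_le_iff]
  constructor
  · obtain ⟨a, ha, hag⟩ := Finset.exists_mem_eq_inf' hs g
    have h2 := abs_sub_le_iff.mp (h a ha)
    have := Finset.inf'_le f ha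
    linarith
  · obtain ⟨a, ha, hag⟩ := Finset.exists_mem_eq_inf' hs f
    have h2 := abs_sub_le_iff.mp (h a ha)
    have := Finset.inf'_le g ha
    linarith

/-- The update map F(X) = L(X) ∧ X is non-expansive in the sup-norm. -/
theorem heatF_nonexpansive [Fintype V] [Fintype ι] [Nonempty ι]
    (E : V → V → Prop) [DecidableRel E]
    (hE : ∀ u : V, (Finset.univ.filter (E u)).Nonempty)
    (W : V → V → ℝ) (A : V → V → ι → ι → ℝ) (X Y : V → ι → ℝ) :
    ‖heatF E hE W A X - heatF E hE W A Y‖ ≤ ‖X - Y‖ := by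
  have key : ∀ u i, |heatF E hE W A X u i - heatF E hE W A Y u i| ≤ ‖X - Y‖ := by
    intro u i
    have hXY : ∀ v j, |X v j - Y v j| ≤ ‖X - Y‖ := by
      intro v j
      calc |X v j - Y v j| = ‖(X - Y) v j‖ := by simp [Real.norm_eq_abs]
        _ ≤ ‖(X - Y) v‖ := norm_le_pi_norm _ j
        _ ≤ ‖X - Y‖ := norm_le_pi_norm _ v
    have hL : |tarskiL E hE W A X u i - tarskiL E hE W A Y u i| ≤ ‖X - Y‖ := by
      apply abs_inf'_sub_inf'_le
      intro v _
      have : |minPlus (sharp (A u v)) (maxPlus (A v u) (X v)) i -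
          minPlus (sharp (A u v)) (maxPlus (A v u) (Y v)) i| ≤ ‖X - Y‖ := by
        apply abs_inf'_sub_inf'_le
        intro j _
        have : |maxPlus (A v u) (X v) j - maxPlus (A v u) (Y v) j| ≤ ‖X - Y‖ := by
          apply abs_sup'_sub_sup'_le
          intro k _
          simpa using hXY v k
        simpa [add_sub_add_left_eq_sub] using this
      simpa [add_sub_add_left_eq_sub] using this
    have := abs_min_sub_min_le_max (tarskiL E hE W A X u i) (X u i)
      (tarskiL E hE W A Y u i) (Y u i)
    exact le_trans this (max_le hL (hXY u i))
  have h0 : (0:ℝ) ≤ ‖X - Y‖ := norm_nonneg _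
  rw [pi_norm_le_iff_of_nonneg h0]
  intro u
  rw [pi_norm_le_iff_of_nonneg h0]
  intro i
  simpa [Real.norm_eq_abs] using key u i
end

section
/- The fixed-point set S = { X : L(X) ∧ X = X } of the Tarski Laplacian heat equation is closed under additive scalar translation: if X ∈ S and α ∈ ℝ, then X + α ∈ S (α added to every entry). -/
open Finset

variable {V ι : Type*}

lemma myInf'_add {κ : Type*} (s : Finset κ) (hs : s.Nonempty) (f : κ → ℝ) (a : ℝ) :
    s.inf' hs f + a = s.inf' hs fun i => f i + a :=
  map_finset_inf' (OrderIso.addRight a) hs f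

lemma mySup'_add {κ : Type*} (s : Finset κ) (hs : s.Nonempty) (f : κ → ℝ) (a : ℝ) :
    s.sup' hs f + a = s.sup' hs fun i => f i + a :=
  map_finset_sup' (OrderIso.addRight a) hs f

/-- The fixed-point set S = {X : L(X) ∧ X = X} is closed under scalar translation. -/
theorem fixedPoints_translation_closed [Fintype V] [Fintype ι] [Nonempty ι]
    (E : V → V → Prop) [DecidableRel E]
    (hE : ∀ u : V, (Finset.univ.filter (E u)).Nonempty)
    (W : V → V → ℝ) (A : V → V → ι → ι → ℝ) (X : V → ι → ℝ)
    (hX : heatF E hE W A X = X) (α : ℝ) :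
    heatF E hE W A (fun u i => X u i + α) = fun u i => X u i + α := by
  have hL : ∀ u i, tarskiL E hE W A (fun u i => X u i + α) u i
      = tarskiL E hE W A X u i + α := by
    intro u i
    unfold tarskiL minPlus maxPlus
    rw [myInf'_add]
    apply Finset.inf'_congr _ rfl
    intro v _
    rw [add_assoc, myInf'_add]
    congr 1
    apply Finset.inf'_congr _ rfl
    intro j _
    rw [add_assoc, mySup'_add]
    congr 1
    apply Finset.sup'_congr _ rfl
    intro k _
    ring
  funext u i
  have h := congrFun (congrFun hX u) i
  simp only [heatF] at h ⊢
  rw [hL]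
  have : min (tarskiL E hE W A X u i + α) (X u i + α) = min (tarskiL E hE W A X u i) (X u i) + α := min_add_add_right _ _ _
  rw [this, h]
end

section
/- The fixed-point set S = { X : L(X) ∧ X = X } of the Tarski Laplacian heat equation is closed under entrywise maximum: if X, Y ∈ S then X ∨ Y ∈ S. Consequently S is a max-plus subsemimodule of (ℝ_max^d)^N. -/
open Finset

variable {V ι : Type*}

/-!
The fixed points of `F = L ∧ id` are exactly the post-fixed points `X ≤ L X` of the Laplacian.
Every ingredient of `L` (max-plus and min-plus products, finite infima, adding weights) is
monotone, so the post-fixed points are closed under `⊔`; every ingredient also commutes with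
adding a constant to all entries, hence so does `F`.
-/

lemma Finset.inf'_add {α G : Type*} [AddGroup G] [LinearOrder G] [AddRightMono G]
    {s : Finset α} (hs : s.Nonempty) (f : α → G) (c : G) :
    s.inf' hs f + c = s.inf' hs fun a => f a + c :=
  map_finset_inf' (OrderIso.addRight c) hs f

section Tropical

variable {m n : Type*} [Fintype n] [Nonempty n] (A : m → n → ℝ)

lemma maxPlus_mono : Monotone (maxPlus A) := fun _ _ h i =>
  Finset.sup'_mono_fun fun j _ => add_le_add_right (h j) (A i j)

lemma minPlus_mono : Monotone (minPlus A) := fun _ _ h i =>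
  Finset.inf'_mono_fun fun j _ => add_le_add_right (h j) (A i j)

lemma maxPlus_add_const (x : n → ℝ) (c : ℝ) :
    maxPlus A (fun j => x j + c) = fun i => maxPlus A x i + c := by
  funext i
  simp only [maxPlus, Finset.sup'_add, add_assoc]

lemma minPlus_add_const (x : n → ℝ) (c : ℝ) :
    minPlus A (fun j => x j + c) = fun i => minPlus A x i + c := by
  funext i
  simp only [minPlus, Finset.inf'_add, add_assoc]

end Tropical

section Laplacian

variable [Fintype V] [Fintype ι] [Nonempty ι] (E : V → V → Prop) [DecidableRel E]
  (hE : ∀ u : V, (Finset.univ.filter (E u)).Nonempty) (W : V → V → ℝ) (A : V → V → ι → ι → ℝ)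

lemma tarskiL_mono : Monotone (tarskiL E hE W A) := fun _ _ h u i =>
  Finset.inf'_mono_fun fun v _ =>
    add_le_add_right (minPlus_mono _ (maxPlus_mono _ (h v)) i) (W u v)

lemma tarskiL_add_const (X : V → ι → ℝ) (c : ℝ) :
    tarskiL E hE W A (fun u i => X u i + c) = fun u i => tarskiL E hE W A X u i + c := by
  funext u i
  simp only [tarskiL, maxPlus_add_const, minPlus_add_const, Finset.inf'_add, add_assoc]

lemma heatF_add_const (X : V → ι → ℝ) (c : ℝ) :
    heatF E hE W A (fun u i => X u i + c) = fun u i => heatF E hE W A X u i + c := by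
  funext u i
  simp only [heatF, tarskiL_add_const, min_add_add_right]

lemma heatF_eq_self_iff (X : V → ι → ℝ) : heatF E hE W A X = X ↔ X ≤ tarskiL E hE W A X := by
  simp only [funext_iff, heatF, min_eq_right_iff, Pi.le_def]

end Laplacian

/-- The fixed-point set S = {X : L(X) ∧ X = X} is closed under entrywise maximum
(together with closure under scalar translation, S is a max-plus subsemimodule). -/
theorem fixedPoints_sup_closed [Fintype V] [Fintype ι] [Nonempty ι]
    (E : V → V → Prop) [DecidableRel E]
    (hE : ∀ u : V, (Finset.univ.filter (E u)).Nonempty)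
    (W : V → V → ℝ) (A : V → V → ι → ι → ℝ) (X Y : V → ι → ℝ)
    (hX : heatF E hE W A X = X) (hY : heatF E hE W A Y = Y) :
    (heatF E hE W A (fun u i => max (X u i) (Y u i)) = fun u i => max (X u i) (Y u i)) ∧
      ∀ α : ℝ, heatF E hE W A (fun u i => X u i + α) = fun u i => X u i + α := by
  refine ⟨?_, fun α => by rw [heatF_add_const, hX]⟩
  rw [heatF_eq_self_iff] at hX hY ⊢
  exact (sup_le_sup hX hY).trans ((tarskiL_mono E hE W A).le_map_sup X Y)
end

section
/- If X is a time-invariant solution of the Tarski Laplacian heat equation (L(X) ∧ X = X), then for every edge (u,v) ∈ E, ‖A_{u,v} ⊞ X_u − A_{v,u} ⊞ X_v‖_∞ ≤ W_{u,v}; i.e., fixed points satisfy the approximate value-equilibrium condition with tolerance given by the edge weight. -/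
open Finset

variable {V ι : Type*}

/-- Fixed points of the heat equation satisfy the approximate value-equilibrium
condition with tolerance the edge weight: for every edge (u,v),
‖A_{u,v} ⊞ X_u − A_{v,u} ⊞ X_v‖_∞ ≤ W_{u,v}. -/
theorem fixedPoint_approx_equilibrium [Fintype V] [Fintype ι] [Nonempty ι]
    (E : V → V → Prop) [DecidableRel E]
    (hEsymm : ∀ u v, E u v → E v u)
    (hE : ∀ u : V, (Finset.univ.filter (E u)).Nonempty)
    (W : V → V → ℝ) (hWsymm : ∀ u v, W u v = W v u)
    (hWpos : ∀ u v, E u v → 0 ≤ W u v)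
    (A : V → V → ι → ι → ℝ) (X : V → ι → ℝ)
    (hX : heatF E hE W A X = X) :
    ∀ u v, E u v →
      ‖maxPlus (A u v) (X u) - maxPlus (A v u) (X v)‖ ≤ W u v := by
  -- From the fixed-point equation, X ≤ L(X).
  have hle : ∀ u i, X u i ≤ tarskiL E hE W A X u i := by
    intro u i
    have := congrFun (congrFun hX u) i
    simp only [heatF] at this
    by_contra h
    push_neg at h
    rw [min_eq_left h.le] at this
    exact absurd this (ne_of_lt h)
  -- key one-sided bound
  have key : ∀ u v, E u v → ∀ j,
      maxPlus (A u v) (X u) j ≤ W u v + maxPlus (A v u) (X v) j := by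
    intro u v huv j
    apply Finset.sup'_le
    intro i _
    have h1 : tarskiL E hE W A X u i ≤
        W u v + minPlus (sharp (A u v)) (maxPlus (A v u) (X v)) i := by
      apply Finset.inf'_le
      simp [huv]
    have h2 : minPlus (sharp (A u v)) (maxPlus (A v u) (X v)) i ≤
        sharp (A u v) i j + maxPlus (A v u) (X v) j := by
      apply Finset.inf'_le
      simp
    have h3 := hle u i
    simp only [sharp] at h2
    linarith
  intro u v huv
  rw [pi_norm_le_iff_of_nonneg (hWpos u v huv)]
  intro j
  rw [Real.norm_eq_abs, Pi.sub_apply, abs_sub_le_iff]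
  constructor
  · have := key u v huv j
    linarith
  · have := key v u (hEsymm u v huv) j
    rw [hWsymm v u] at this
    linarith
end

section
/- For X ∈ (ℝ^d)^N with L(X) ⪰ X, and any edge (u,v) ∈ E with symmetric weights W_{u,v} = W_{v,u}, both inequalities hold: A_{v,u} ⊞ X_v ⪰ A_{u,v} ⊞ (X_u − W_{u,v}) and A_{u,v} ⊞ X_u ⪰ A_{v,u} ⊞ (X_v − W_{u,v}). -/
open Finset

variable {V ι : Type*}

lemma adj {m n : Type*} [Fintype m] [Fintype n] [Nonempty m] [Nonempty n]
    (A : m → n → ℝ) (x : n → ℝ) (y : m → ℝ)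
    (h : ∀ j, x j ≤ minPlus (sharp A) y j) :
    ∀ i, maxPlus A x i ≤ y i := by
  intro i
  apply Finset.sup'_le
  intro j _
  have := le_trans (h j) (Finset.inf'_le _ (Finset.mem_univ i))
  simp only [sharp] at this
  linarith

lemma key {V ι : Type*} [Fintype V] [Fintype ι] [Nonempty ι]
    (E : V → V → Prop) [DecidableRel E]
    (hE : ∀ u : V, (Finset.univ.filter (E u)).Nonempty)
    (W : V → V → ℝ) (A : V → V → ι → ι → ℝ) (X : V → ι → ℝ)
    (hX : ∀ u i, X u i ≤ tarskiL E hE W A X u i)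
    (u v : V) (huv : E u v) :
    ∀ i, maxPlus (A u v) (fun j => X u j - W u v) i ≤ maxPlus (A v u) (X v) i := by
  apply adj
  intro j
  have h := hX u j
  have hmem : v ∈ Finset.univ.filter (E u) := by simp [huv]
  have := le_trans h (Finset.inf'_le _ hmem)
  linarith

/-- If L(X) ⪰ X, then for any edge (u,v) with symmetric weights,
A_{v,u} ⊞ X_v ⪰ A_{u,v} ⊞ (X_u − W_{u,v}) and
A_{u,v} ⊞ X_u ⪰ A_{v,u} ⊞ (X_v − W_{u,v}). -/
theorem subfixed_edge_inequalities [Fintype V] [Fintype ι] [Nonempty ι]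
    (E : V → V → Prop) [DecidableRel E]
    (hEsymm : ∀ u v, E u v → E v u)
    (hE : ∀ u : V, (Finset.univ.filter (E u)).Nonempty)
    (W : V → V → ℝ) (hWsymm : ∀ u v, W u v = W v u)
    (A : V → V → ι → ι → ℝ) (X : V → ι → ℝ)
    (hX : ∀ u i, X u i ≤ tarskiL E hE W A X u i) :
    ∀ u v, E u v →
      (∀ i, maxPlus (A u v) (fun j => X u j - W u v) i ≤ maxPlus (A v u) (X v) i) ∧
      (∀ i, maxPlus (A v u) (fun j => X v j - W u v) i ≤ maxPlus (A u v) (X u) i) := by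
  intro u v huv
  exact ⟨key E hE W A X hX u v huv, by
    have := key E hE W A X hX v u (hEsymm u v huv)
    rwa [hWsymm u v]⟩
end
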